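/- Let φ be a maximal weight at ζ with Lelong number ν_φ = ν_φ(ζ) > 0 and Łojasiewicz exponent α_φ = limsup_{z→ζ} φ(z)/log|z-ζ|. Then for any plurisubharmonic germ u at ζ, α_φ^{-1}·ν_u(ζ) ≤ σ(u,φ) ≤ ν_φ^{-1}·ν_u(ζ), where ν_u(ζ) = liminf_{z→ζ} u(z)/log|z-ζ| is the Lelong number of u at ζ. -/

import Mathlib

open Filter MeasureTheory Topology

noncomputable section

abbrev Cn (n : ℕ) := EuclideanSpace ℂ (Fin n)

/-- Plurisubharmonicity on `s`: upper semicontinuity together with the sub-mean value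
inequality along complex lines. -/
def PSHOn (n : ℕ) (f : Cn n → ℝ) (s : Set (Cn n)) : Prop :=
  UpperSemicontinuousOn f s ∧
    ∀ z ∈ s, ∀ w : Cn n,
      (∀ t : ℂ, ‖t‖ ≤ 1 → z + t • w ∈ s) →
        f z ≤ (2 * Real.pi)⁻¹ * ∫ θ in (0:ℝ)..(2 * Real.pi),
          f (z + Complex.exp (θ * Complex.I) • w)

/-- `f` is a maximal plurisubharmonic function on `ω`. -/
def MaximalOn (n : ℕ) (f : Cn n → ℝ) (ω : Set (Cn n)) : Prop :=
  ∀ U : Set (Cn n), IsOpen U → IsCompact (closure U) → closure U ⊆ ω →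
    ∀ v : Cn n → ℝ, PSHOn n v ω →
      (∀ z ∈ frontier U, v z ≤ f z) → ∀ z ∈ U, v z ≤ f z

/-- `φ` is a maximal weight centered at `ζ` on the neighbourhood `Ω`:
plurisubharmonic near `ζ`, locally bounded outside `ζ`, `φ(ζ) = -∞`
(equivalently, `φ → -∞` at `ζ`), and maximal in a punctured neighbourhood of `ζ`. -/
def IsMaxWeight (n : ℕ) (ζ : Cn n) (φ : Cn n → ℝ) (Ω : Set (Cn n)) : Prop :=
  IsOpen Ω ∧ ζ ∈ Ω ∧
    PSHOn n φ (Ω \ {ζ}) ∧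
    (∀ z ∈ Ω \ {ζ}, ∃ U ∈ 𝓝 z, BddBelow (φ '' U) ∧ BddAbove (φ '' U)) ∧
    Tendsto φ (𝓝[≠] ζ) atBot ∧
    MaximalOn n φ (Ω \ {ζ})

/-- The relative type `σ(u,φ) = liminf_{z→ζ} u(z)/φ(z)`. -/
def relType (n : ℕ) (u φ : Cn n → ℝ) (ζ : Cn n) : EReal :=
  liminf (fun z => ((u z / φ z : ℝ) : EReal)) (𝓝[≠] ζ)

/-- The Lelong number `ν_u(ζ) = liminf_{z→ζ} u(z)/log|z-ζ|`. -/
def lelong (n : ℕ) (u : Cn n → ℝ) (ζ : Cn n) : EReal :=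
  relType n u (fun z => Real.log ‖z - ζ‖) ζ

/-!
The relative types against `log|· - ζ|` are `σ(φ, log|·-ζ|) = ν_φ` and, by the definition of `α`,
`σ(log|·-ζ|, φ) ≥ α⁻¹`; moreover `ν_φ > 0` forces `φ → -∞` at `ζ`. Both inequalities are then
instances of the chain rule `σ(u,φ)·σ(φ,ψ) ≤ σ(u,ψ)`, which follows from `u/ψ = (u/φ)·(φ/ψ)`
once the relative types involved are nonnegative, as they are when `u` is bounded above near `ζ`
and the weights tend to `-∞`.
-/

lemma UpperSemicontinuousOn.eventually_lt_of_mem_nhds {X β : Type*} [TopologicalSpace X]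
    [Preorder β] {f : X → β} {s : Set X} {x : X} {y : β} (hf : UpperSemicontinuousOn f s)
    (hs : s ∈ 𝓝 x) (hy : f x < y) : ∀ᶠ z in 𝓝 x, f z < y := by
  have h := hf x (mem_of_mem_nhds hs) y hy
  rwa [nhdsWithin_eq_nhds.2 hs] at h

namespace EReal

lemma liminf_mul_liminf_le {X : Type*} {l : Filter X} {f g : X → EReal}
    (hf : 0 ≤ liminf f l) (hfg : 0 ≤ liminf (f * g) l) :
    liminf f l * liminf g l ≤ liminf (f * g) l := by
  refine mul_le_of_forall_lt_of_nonneg hf hfg fun a ha b hb ↦ (le_liminf_iff).2 fun c hc ↦ ?_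
  filter_upwards [eventually_lt_of_lt_liminf ha.2, eventually_lt_of_lt_liminf hb.2]
    with x hfx hgx
  exact hc.trans_le (mul_le_mul hfx.le hgx.le hb.1.le (ha.1.le.trans hfx.le))

end EReal

section RealQuotients

variable {X : Type*} {l : Filter X}

lemma liminf_div_nonneg_of_tendsto_atBot {u g : X → ℝ} {M : ℝ} (hu : ∀ᶠ x in l, u x ≤ M)
    (hg : Tendsto g l atBot) : 0 ≤ liminf (fun x ↦ ((u x / g x : ℝ) : EReal)) l := by
  have hMg : Tendsto (fun x ↦ ((M / g x : ℝ) : EReal)) l (𝓝 0) :=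
    (continuous_coe_real_ereal.tendsto 0).comp (tendsto_const_nhds.div_atBot hg)
  refine (le_liminf_iff).2 fun y hy ↦ ?_
  filter_upwards [hMg.eventually (lt_mem_nhds hy), hu, hg.eventually (eventually_lt_atBot 0)]
    with x hMgx hux hgx
  exact hMgx.trans_le (EReal.coe_le_coe_iff.2 (div_le_div_of_nonpos_of_le hgx.le hux))

lemma tendsto_atBot_of_eventually_lt_div {φ ψ : X → ℝ} {c : ℝ} (hc : 0 < c)
    (h : ∀ᶠ x in l, c < φ x / ψ x) (hψ : Tendsto ψ l atBot) : Tendsto φ l atBot := by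
  refine tendsto_atBot_mono' l ?_ (hψ.const_mul_atBot hc)
  filter_upwards [h, hψ.eventually (eventually_lt_atBot 0)] with x hx hψx
  exact ((lt_div_iff_of_neg hψx).1 hx).le

lemma inv_le_liminf_inv {f : X → ℝ} {a : ℝ} (ha : 0 < a) (hf : ∀ᶠ x in l, 0 < f x)
    (h : limsup (fun x ↦ (f x : EReal)) l ≤ a) :
    ((a⁻¹ : ℝ) : EReal) ≤ liminf (fun x ↦ (((f x)⁻¹ : ℝ) : EReal)) l := by
  refine (le_liminf_iff).2 fun y hy ↦ ?_
  obtain ⟨b, hyb, hba⟩ := EReal.exists_between_coe_real hy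
  rw [EReal.coe_lt_coe_iff] at hba
  rcases le_or_gt b 0 with hb | hb
  · filter_upwards [hf] with x hfx
    exact hyb.trans_le (EReal.coe_le_coe_iff.2 (hb.trans (inv_pos.2 hfx).le))
  · have hab : (a : EReal) < (b⁻¹ : ℝ) := EReal.coe_lt_coe_iff.2 ((lt_inv_comm₀ hb ha).1 hba)
    filter_upwards [eventually_lt_of_limsup_lt (h.trans_lt hab), hf] with x hfx hfx_pos
    exact hyb.trans (EReal.coe_lt_coe_iff.2 ((lt_inv_comm₀ hfx_pos hb).1
      (EReal.coe_lt_coe_iff.1 hfx)))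

end RealQuotients

theorem relType_mul_relType_le {n : ℕ} {u φ ψ : Cn n → ℝ} {ζ : Cn n}
    (hφ : ∀ᶠ z in 𝓝[≠] ζ, φ z ≠ 0) (huφ : 0 ≤ relType n u φ ζ) (huψ : 0 ≤ relType n u ψ ζ) :
    relType n u φ ζ * relType n φ ψ ζ ≤ relType n u ψ ζ := by
  have hquot : (fun z ↦ ((u z / φ z : ℝ) : EReal)) * (fun z ↦ ((φ z / ψ z : ℝ) : EReal))
      =ᶠ[𝓝[≠] ζ] fun z ↦ ((u z / ψ z : ℝ) : EReal) :=
    hφ.mono fun z hz ↦ by simp only [Pi.mul_apply, ← EReal.coe_mul, div_mul_div_cancel₀ hz]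
  unfold relType at *
  rw [← liminf_congr hquot] at huψ ⊢
  exact EReal.liminf_mul_liminf_le huφ huψ

theorem relType_vs_lelong_general (n : ℕ) (ζ : Cn n) (φ u : Cn n → ℝ) (V : Set (Cn n))
    (hV : IsOpen V) (hζV : ζ ∈ V) (hu : PSHOn n u V)
    (νφ α : ℝ) (hνφ : lelong n φ ζ = (νφ : EReal)) (hνφpos : 0 < νφ)
    (hα : limsup (fun z => ((φ z / Real.log ‖z - ζ‖ : ℝ) : EReal)) (𝓝[≠] ζ)
        = (α : EReal))
    (hαpos : 0 < α) :
    ((α⁻¹ : ℝ) : EReal) * lelong n u ζ ≤ relType n u φ ζ ∧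
      relType n u φ ζ ≤ ((νφ⁻¹ : ℝ) : EReal) * lelong n u ζ := by
  set logDist : Cn n → ℝ := fun z ↦ Real.log ‖z - ζ‖
  have hlog : Tendsto logDist (𝓝[≠] ζ) atBot :=
    Real.tendsto_log_nhdsGT_zero.comp (tendsto_norm_sub_self_nhdsNE ζ)
  have hratio : ∀ᶠ z in 𝓝[≠] ζ, νφ / 2 < φ z / logDist z := by
    have hhalf : ((νφ / 2 : ℝ) : EReal) < lelong n φ ζ :=
      hνφ ▸ EReal.coe_lt_coe_iff.2 (half_lt_self hνφpos)
    filter_upwards [eventually_lt_of_lt_liminf hhalf] with z hz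
    exact EReal.coe_lt_coe_iff.1 hz
  have hpos : ∀ᶠ z in 𝓝[≠] ζ, 0 < φ z / logDist z := hratio.mono fun _ ↦ (half_pos hνφpos).trans
  have hφ : Tendsto φ (𝓝[≠] ζ) atBot :=
    tendsto_atBot_of_eventually_lt_div (half_pos hνφpos) hratio hlog
  have hbdd : ∀ᶠ z in 𝓝[≠] ζ, u z ≤ u ζ + 1 :=
    ((hu.1.eventually_lt_of_mem_nhds (hV.mem_nhds hζV) (lt_add_one _)).filter_mono
      nhdsWithin_le_nhds).mono fun _ ↦ le_of_lt
  have hσ : 0 ≤ relType n u φ ζ := liminf_div_nonneg_of_tendsto_atBot hbdd hφ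
  have hν : 0 ≤ lelong n u ζ := liminf_div_nonneg_of_tendsto_atBot hbdd hlog
  have hinv : ((α⁻¹ : ℝ) : EReal) ≤ relType n logDist φ ζ := by
    unfold relType
    simpa only [inv_div] using inv_le_liminf_inv hαpos hpos hα.le
  constructor
  · calc ((α⁻¹ : ℝ) : EReal) * lelong n u ζ ≤ relType n logDist φ ζ * lelong n u ζ :=
          mul_le_mul_of_nonneg_right hinv hν
      _ = lelong n u ζ * relType n logDist φ ζ := mul_comm _ _
      _ ≤ relType n u φ ζ :=
          relType_mul_relType_le (hpos.mono fun _ h ↦ (div_ne_zero_iff.1 h.ne').2) hν hσ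
  · have hchain : relType n u φ ζ * lelong n φ ζ ≤ lelong n u ζ :=
      relType_mul_relType_le (hpos.mono fun _ h ↦ (div_ne_zero_iff.1 h.ne').1) hσ hν
    rwa [hνφ, ← EReal.le_div_iff_mul_le (EReal.coe_pos.2 hνφpos) (EReal.coe_ne_top _),
      div_eq_mul_inv, mul_comm, ← EReal.coe_inv] at hchain

/-- Comparison with Lelong numbers: for a maximal weight `φ` with Lelong number
`ν_φ > 0` and Łojasiewicz exponent `α_φ = limsup_{z→ζ} φ(z)/log|z-ζ| < ∞`,
`α_φ⁻¹·ν_u(ζ) ≤ σ(u,φ) ≤ ν_φ⁻¹·ν_u(ζ)`. -/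
theorem relType_vs_lelong (n : ℕ) (ζ : Cn n) (φ u : Cn n → ℝ) (Ω V : Set (Cn n))
    (hV : IsOpen V) (hζV : ζ ∈ V) (hu : PSHOn n u V)
    (hφ : IsMaxWeight n ζ φ Ω)
    (νφ α : ℝ) (hνφ : lelong n φ ζ = (νφ : EReal)) (hνφpos : 0 < νφ)
    (hα : limsup (fun z => ((φ z / Real.log ‖z - ζ‖ : ℝ) : EReal)) (𝓝[≠] ζ)
        = (α : EReal))
    (hαpos : 0 < α) :
    ((α⁻¹ : ℝ) : EReal) * lelong n u ζ ≤ relType n u φ ζ ∧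
      relType n u φ ζ ≤ ((νφ⁻¹ : ℝ) : EReal) * lelong n u ζ :=
  relType_vs_lelong_general n ζ φ u V hV hζV hu νφ α hνφ hνφpos hα hαpos
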